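/- arXiv:2404.14650 — 10 statements merged into one kernel-verified Lean document; each statement's English description precedes it below -/
import Mathlib

section
/- In Exel's semigroup S(G) of a group G, setting e_g := [g][g^{-1}], for all g, h ∈ G one has [g] e_h = e_{gh} [g]. -/
/-- The defining relations of Exel's semigroup `S(G)` of a group `G`:
`[1] = 1`, `[s⁻¹][s][t] = [s⁻¹][st]`, `[s][t][t⁻¹] = [st][t⁻¹]`. -/
inductive ExelRel (G : Type*) [Group G] : FreeMonoid G → FreeMonoid G → Prop
  | one : ExelRel G (FreeMonoid.of 1) 1
  | left (s t : G) : ExelRel G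
      (FreeMonoid.of s⁻¹ * FreeMonoid.of s * FreeMonoid.of t)
      (FreeMonoid.of s⁻¹ * FreeMonoid.of (s * t))
  | right (s t : G) : ExelRel G
      (FreeMonoid.of s * FreeMonoid.of t * FreeMonoid.of t⁻¹)
      (FreeMonoid.of (s * t) * FreeMonoid.of t⁻¹)

/-- The congruence on the free monoid on `G` generated by the Exel relations. -/
def ExelCon (G : Type*) [Group G] : Con (FreeMonoid G) := conGen (ExelRel G)

/-- Exel's semigroup (an inverse monoid) `S(G)` of the group `G`. -/
abbrev ExelMonoid (G : Type*) [Group G] := (ExelCon G).Quotient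

/-- The canonical generator `[g]` of `S(G)`. -/
def ExelMonoid.of {G : Type*} [Group G] (g : G) : ExelMonoid G :=
  (ExelCon G).mk' (FreeMonoid.of g)

/-- The idempotent `e_g := [g][g⁻¹]` in `S(G)`. -/
def ExelMonoid.e {G : Type*} [Group G] (g : G) : ExelMonoid G :=
  ExelMonoid.of g * ExelMonoid.of g⁻¹

/-! Both sides equal `[gh][h⁻¹]`: the left one by the relation `[s][t][t⁻¹] = [st][t⁻¹]`, the
right one by `[s⁻¹][s][t] = [s⁻¹][st]` applied with `s = (gh)⁻¹`, `t = g`. -/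

namespace ExelMonoid

variable {G : Type*} [Group G]

theorem of_mul_of_mul_of_inv (s t : G) :
    of s * of t * of t⁻¹ = of (s * t) * of t⁻¹ := by
  simp only [of, ← map_mul]
  exact (ExelCon G).eq.2 (ConGen.Rel.of _ _ (ExelRel.right s t))

theorem of_inv_mul_of_mul_of (s t : G) :
    of s⁻¹ * of s * of t = of s⁻¹ * of (s * t) := by
  simp only [of, ← map_mul]
  exact (ExelCon G).eq.2 (ConGen.Rel.of _ _ (ExelRel.left s t))

theorem e_mul_of (s t : G) : e s * of t = of s * of (s⁻¹ * t) := by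
  simpa only [e, inv_inv] using of_inv_mul_of_mul_of s⁻¹ t

end ExelMonoid

/-- In Exel's semigroup `S(G)`, for all `g h : G` one has `[g] e_h = e_{gh} [g]`. -/
theorem exel_of_mul_e {G : Type*} [Group G] (g h : G) :
    ExelMonoid.of g * ExelMonoid.e h = ExelMonoid.e (g * h) * ExelMonoid.of g := by
  rw [ExelMonoid.e, ← mul_assoc, ExelMonoid.of_mul_of_mul_of_inv, ExelMonoid.e_mul_of,
    mul_inv_rev, inv_mul_cancel_right]
end

section
/- In Exel's semigroup S(G), the elements e_g := [g][g^{-1}] are commuting idempotents: e_g e_h = e_h e_g and e_g e_g = e_g for all g, h ∈ G. -/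
namespace ExelAux

variable {G : Type*} [Group G]

lemma rel_eq {a b : FreeMonoid G} (hab : ExelRel G a b) :
    (ExelCon G).mk' a = (ExelCon G).mk' b :=
  (Con.eq _).mpr (ConGen.Rel.of _ _ hab)

lemma of_one : (ExelMonoid.of (1 : G)) = 1 := by
  have := rel_eq (ExelRel.one (G := G))
  simpa [ExelMonoid.of] using this

lemma lrel (s t : G) :
    ExelMonoid.of s⁻¹ * ExelMonoid.of s * ExelMonoid.of t
      = ExelMonoid.of s⁻¹ * ExelMonoid.of (s * t) := by
  have := rel_eq (ExelRel.left s t)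
  simpa [ExelMonoid.of, map_mul] using this

lemma rrel (s t : G) :
    ExelMonoid.of s * ExelMonoid.of t * ExelMonoid.of t⁻¹
      = ExelMonoid.of (s * t) * ExelMonoid.of t⁻¹ := by
  have := rel_eq (ExelRel.right s t)
  simpa [ExelMonoid.of, map_mul] using this

lemma aux1 (a : G) :
    ExelMonoid.of a * ExelMonoid.of a⁻¹ * ExelMonoid.of a = ExelMonoid.of a := by
  have h := rrel a a⁻¹
  rw [inv_inv, mul_inv_cancel, of_one, one_mul] at h
  exact h

lemma aux2 (a : G) :
    ExelMonoid.of a⁻¹ * ExelMonoid.of a * ExelMonoid.of a⁻¹ = ExelMonoid.of a⁻¹ := by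
  have h := lrel a a⁻¹
  rw [mul_inv_cancel, of_one, mul_one] at h
  exact h

lemma key (g h : G) :
    ExelMonoid.e g * ExelMonoid.e h
      = ExelMonoid.of g * ExelMonoid.of (g⁻¹ * h) * ExelMonoid.of h⁻¹ := by
  have h1 := lrel g⁻¹ h
  rw [inv_inv] at h1
  calc ExelMonoid.e g * ExelMonoid.e h
      = ExelMonoid.of g * ExelMonoid.of g⁻¹ * ExelMonoid.of h * ExelMonoid.of h⁻¹ := by
        simp [ExelMonoid.e, mul_assoc]
    _ = ExelMonoid.of g * ExelMonoid.of (g⁻¹ * h) * ExelMonoid.of h⁻¹ := by rw [h1]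

lemma key2 (g h : G) :
    ExelMonoid.of g * ExelMonoid.of (g⁻¹ * h) * ExelMonoid.of h⁻¹
      = ExelMonoid.of h * ExelMonoid.of (h⁻¹ * g) * ExelMonoid.of g⁻¹ := by
  have h1 := aux1 (g⁻¹ * h)
  rw [mul_inv_rev, inv_inv] at h1
  have h2 := lrel (g⁻¹ * h) h⁻¹
  rw [mul_inv_rev, inv_inv, mul_assoc g⁻¹ h h⁻¹, mul_inv_cancel, mul_one] at h2
  have h3 := rrel g (g⁻¹ * h)
  rw [mul_inv_rev, inv_inv, ← mul_assoc g g⁻¹ h, mul_inv_cancel, one_mul] at h3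
  calc ExelMonoid.of g * ExelMonoid.of (g⁻¹ * h) * ExelMonoid.of h⁻¹
      = ExelMonoid.of g * (ExelMonoid.of (g⁻¹ * h) * ExelMonoid.of (h⁻¹ * g)
          * ExelMonoid.of (g⁻¹ * h)) * ExelMonoid.of h⁻¹ := by
        conv_lhs => rw [← h1]
    _ = ExelMonoid.of g * ExelMonoid.of (g⁻¹ * h)
          * (ExelMonoid.of (h⁻¹ * g) * ExelMonoid.of (g⁻¹ * h) * ExelMonoid.of h⁻¹) := by
        simp only [mul_assoc]
    _ = ExelMonoid.of g * ExelMonoid.of (g⁻¹ * h)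
          * (ExelMonoid.of (h⁻¹ * g) * ExelMonoid.of g⁻¹) := by rw [h2]
    _ = ExelMonoid.of g * ExelMonoid.of (g⁻¹ * h) * ExelMonoid.of (h⁻¹ * g)
          * ExelMonoid.of g⁻¹ := by simp only [mul_assoc]
    _ = ExelMonoid.of h * ExelMonoid.of (h⁻¹ * g) * ExelMonoid.of g⁻¹ := by rw [h3]

end ExelAux

/-- In Exel's semigroup `S(G)`, the elements `e_g := [g][g⁻¹]` are commuting idempotents:
`e_g e_h = e_h e_g` and `e_g e_g = e_g` for all `g, h ∈ G`. -/


theorem exel_e_comm_idem {G : Type*} [Group G] (g h : G) :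
    ExelMonoid.e g * ExelMonoid.e h = ExelMonoid.e h * ExelMonoid.e g ∧
      ExelMonoid.e g * ExelMonoid.e g = ExelMonoid.e g := by
  constructor
  · rw [ExelAux.key g h, ExelAux.key2 g h, ← ExelAux.key h g]
  · have h2 := ExelAux.aux2 g
    calc ExelMonoid.e g * ExelMonoid.e g
        = ExelMonoid.of g * (ExelMonoid.of g⁻¹ * ExelMonoid.of g * ExelMonoid.of g⁻¹) := by
          simp only [ExelMonoid.e, mul_assoc]
      _ = ExelMonoid.of g * ExelMonoid.of g⁻¹ := by rw [h2]
      _ = ExelMonoid.e g := rfl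
end

section
/- Let ε: K_par G → B be the K-linear map given by ε(z) = 1 ◁ z, where B is the subalgebra generated by the idempotents e_g and u ◁ [g] = [g^{-1}] u [g]. Then for all h ∈ G and z ∈ K_par G, [h^{-1}] ε(z) = ε(z[h]) [h^{-1}]. -/
/-- The partial group algebra `K_par G`: the semigroup `K`-algebra of Exel's semigroup. -/
abbrev KparG (K G : Type*) [CommRing K] [Group G] := MonoidAlgebra K (ExelMonoid G)

/-- The canonical generator `[g]` of `K_par G`. -/
noncomputable def pr (K : Type*) {G : Type*} [CommRing K] [Group G] (g : G) : KparG K G :=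
  MonoidAlgebra.of K (ExelMonoid G) (ExelMonoid.of g)

/-- The idempotent `e_g := [g][g⁻¹]` in `K_par G`. -/
noncomputable def eK (K : Type*) {G : Type*} [CommRing K] [Group G] (g : G) : KparG K G :=
  pr K g * pr K g⁻¹

theorem exelRel_mk {G : Type*} [Group G] {x y : FreeMonoid G} (h : ExelRel G x y) :
    (x : ExelMonoid G) = (y : ExelMonoid G) :=
  (Con.eq _).mpr (ConGen.Rel.of _ _ h)

/-- The inverse-semigroup involution `w ↦ w*` of `S(G)`, as a monoid hom to the opposite. -/
noncomputable def exelStarHom (G : Type*) [Group G] :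
    ExelMonoid G →* (ExelMonoid G)ᵐᵒᵖ :=
  Con.lift _ (FreeMonoid.lift fun g => MulOpposite.op (ExelMonoid.of g⁻¹)) (by
    refine Con.conGen_le.mpr ?_
    intro x y hxy
    rw [Con.ker_rel]
    cases hxy with
    | one =>
        simp only [map_one, FreeMonoid.lift_eval_of, inv_one, MulOpposite.op_eq_one_iff]
        simpa [ExelMonoid.of] using exelRel_mk (ExelRel.one (G := G))
    | left s t =>
        simp only [map_mul, FreeMonoid.lift_eval_of, ← MulOpposite.op_mul]
        congr 1
        rw [mul_inv_rev, ← mul_assoc]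
        simpa [ExelMonoid.of, mul_assoc] using exelRel_mk (ExelRel.right (G := G) t⁻¹ s⁻¹)
    | right s t =>
        simp only [map_mul, FreeMonoid.lift_eval_of, ← MulOpposite.op_mul]
        congr 1
        rw [mul_inv_rev]
        simpa [ExelMonoid.of, mul_assoc] using exelRel_mk (ExelRel.left (G := G) t⁻¹ s⁻¹))

/-- The involution `w ↦ w*` on `S(G)`. -/
noncomputable def exelStar {G : Type*} [Group G] (w : ExelMonoid G) : ExelMonoid G :=
  (exelStarHom G w).unop

/-- The map `ε : K_par G → K_par G`, `ε(z) = 1 ◁ z`: the `K`-linear extension of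
`w ↦ w* w` on basis elements `w ∈ S(G)`; on generators `u ◁ [g] = [g⁻¹] u [g]`,
so that `ε(z) = 1 ◁ z`. -/
noncomputable def epsKpar (K G : Type*) [CommRing K] [Group G] :
    KparG K G →ₗ[K] KparG K G :=
  MonoidAlgebra.mapDomainLinearMap K K (fun w : ExelMonoid G => exelStar w * w)

/-- `B`, the subalgebra of `K_par G` generated by the idempotents `e_g`. -/
noncomputable def Bsub (K G : Type*) [CommRing K] [Group G] : Subalgebra K (KparG K G) :=
  Algebra.adjoin K (Set.range fun g : G => eK K g)

namespace ExelMonoid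

variable {G : Type*} [Group G]

theorem of_one : of (1 : G) = 1 :=
  exelRel_mk .one

theorem of_inv_mul_e (g : G) : of g⁻¹ * e g = of g⁻¹ := by
  rw [e, ← mul_assoc, of_inv_mul_of_mul_of, mul_inv_cancel, of_one, mul_one]

theorem of_mul_e (g h : G) : of g * e h = e (g * h) * of g := by
  have hleft := of_inv_mul_of_mul_of (g * h)⁻¹ g
  rw [inv_inv, show (g * h)⁻¹ * g = h⁻¹ by group] at hleft
  rw [e, e, ← mul_assoc, of_mul_of_mul_of_inv, mul_assoc, ← hleft, mul_assoc]

theorem commute_e (g h : G) : Commute (e g) (e h) := by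
  have hconj := of_mul_e g (g⁻¹ * h)
  rw [mul_inv_cancel_left] at hconj
  calc e g * e h = of g * (of g⁻¹ * e h) := by rw [e, mul_assoc]
    _ = e h * e g := by rw [of_mul_e, ← mul_assoc, hconj, mul_assoc]; rfl

def eSubmonoid (G : Type*) [Group G] : Submonoid (ExelMonoid G) :=
  Submonoid.closure (Set.range e)

theorem e_mem_eSubmonoid (g : G) : e g ∈ eSubmonoid G :=
  Submonoid.subset_closure ⟨g, rfl⟩

theorem exists_of_mul_eq_mul_of {u : ExelMonoid G} (hu : u ∈ eSubmonoid G) (g : G) :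
    ∃ u' ∈ eSubmonoid G, of g * u = u' * of g := by
  induction hu using Submonoid.closure_induction with
  | mem x hx =>
    obtain ⟨k, rfl⟩ := hx
    exact ⟨e (g * k), e_mem_eSubmonoid _, of_mul_e g k⟩
  | one => exact ⟨1, one_mem _, by simp⟩
  | mul x y _ _ ihx ihy =>
    obtain ⟨x', hx', hx⟩ := ihx
    obtain ⟨y', hy', hy⟩ := ihy
    exact ⟨x' * y', mul_mem hx' hy', by rw [← mul_assoc, hx, mul_assoc, hy, ← mul_assoc]⟩

theorem commute_e_of_mem {u : ExelMonoid G} (hu : u ∈ eSubmonoid G) (h : G) :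
    Commute u (e h) := by
  induction hu using Submonoid.closure_induction with
  | mem x hx => obtain ⟨g, rfl⟩ := hx; exact commute_e g h
  | one => exact Commute.one_left _
  | mul x y _ _ hx hy => exact hx.mul_left hy

end ExelMonoid

section Star

open ExelMonoid

variable {G : Type*} [Group G]

theorem exelStar_of (g : G) : exelStar (of g) = of g⁻¹ :=
  congrArg MulOpposite.unop (FreeMonoid.lift_eval_of (fun g => MulOpposite.op (of g⁻¹)) g :)

theorem exelStar_mul (x y : ExelMonoid G) : exelStar (x * y) = exelStar y * exelStar x := by
  simp only [exelStar, map_mul, MulOpposite.unop_mul]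

theorem exelStar_one : exelStar (1 : ExelMonoid G) = 1 := by
  simp only [exelStar, map_one, MulOpposite.unop_one]

theorem exelStar_of_mul_mul_of_mem {u : ExelMonoid G} (hu : u ∈ eSubmonoid G) (g : G) :
    exelStar (of g) * u * of g ∈ eSubmonoid G := by
  obtain ⟨u', hu', hconj⟩ := exists_of_mul_eq_mul_of hu g⁻¹
  have he : of g⁻¹ * of g = e g⁻¹ := by rw [e, inv_inv]
  rw [exelStar_of, hconj, mul_assoc, he]
  exact mul_mem hu' (e_mem_eSubmonoid _)

theorem exelStar_mul_mul_mem (w : ExelMonoid G) {u : ExelMonoid G} (hu : u ∈ eSubmonoid G) :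
    exelStar w * u * w ∈ eSubmonoid G := by
  induction w using Con.induction_on generalizing u with
  | H x =>
    induction x using FreeMonoid.inductionOn' generalizing u with
    | one => simpa only [Con.coe_one, exelStar_one, one_mul, mul_one] using hu
    | of_mul g v ih =>
      have hgv : ((FreeMonoid.of g * v : FreeMonoid G) : ExelMonoid G) = of g * v := rfl
      rw [hgv, exelStar_mul]
      simpa only [mul_assoc] using ih (exelStar_of_mul_mul_of_mem hu g)

theorem exelStar_mul_self_mem (w : ExelMonoid G) : exelStar w * w ∈ eSubmonoid G := by
  simpa only [mul_one] using exelStar_mul_mul_mem w (one_mem _)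

theorem of_inv_mul_exelStar_mul_self (w : ExelMonoid G) (h : G) :
    of h⁻¹ * (exelStar w * w) = exelStar (w * of h) * (w * of h) * of h⁻¹ := by
  calc of h⁻¹ * (exelStar w * w) = of h⁻¹ * (e h * (exelStar w * w)) := by
        rw [← mul_assoc (of h⁻¹) (e h), of_inv_mul_e]
    _ = of h⁻¹ * (exelStar w * w * e h) := by
        rw [(commute_e_of_mem (exelStar_mul_self_mem w) h).eq]
    _ = exelStar (w * of h) * (w * of h) * of h⁻¹ := by
        simp only [exelStar_mul, exelStar_of, e, mul_assoc]

end Star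

section PartialGroupAlgebra

open ExelMonoid MonoidAlgebra

variable (K : Type*) {G : Type*} [CommRing K] [Group G]

theorem epsKpar_single (w : ExelMonoid G) (a : K) :
    epsKpar K G (single w a) = single (exelStar w * w) a :=
  mapDomainLinearMap_single _ _ _

theorem single_mem_Bsub {m : ExelMonoid G} (hm : m ∈ eSubmonoid G) (a : K) :
    single m a ∈ Bsub K G := by
  rw [← mul_one a, ← smul_single', ← MonoidAlgebra.of_apply]
  refine Subalgebra.smul_mem _ ?_ a
  induction hm using Submonoid.closure_induction with
  | mem x hx =>
    obtain ⟨g, rfl⟩ := hx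
    rw [ExelMonoid.e, map_mul]
    exact Algebra.subset_adjoin ⟨g, rfl⟩
  | one => rw [map_one]; exact one_mem _
  | mul x y _ _ hx hy => rw [map_mul]; exact mul_mem hx hy

theorem epsKpar_mem_Bsub (z : KparG K G) : epsKpar K G z ∈ Bsub K G := by
  induction z using MonoidAlgebra.induction_linear with
  | zero => rw [map_zero]; exact zero_mem _
  | add x y hx hy => rw [map_add]; exact add_mem hx hy
  | single w a => rw [epsKpar_single]; exact single_mem_Bsub K (exelStar_mul_self_mem w) a

theorem pr_inv_mul_epsKpar (h : G) (z : KparG K G) :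
    pr K h⁻¹ * epsKpar K G z = epsKpar K G (z * pr K h) * pr K h⁻¹ := by
  induction z using MonoidAlgebra.induction_linear with
  | zero => simp
  | add x y hx hy => rw [map_add, mul_add, hx, hy, add_mul, map_add, add_mul]
  | single w a =>
    simp only [pr, MonoidAlgebra.of_apply, single_mul_single, epsKpar_single, one_mul, mul_one,
      of_inv_mul_exelStar_mul_self]

end PartialGroupAlgebra

/-- `ε` takes values in `B`, and for all `h ∈ G` and `z ∈ K_par G` one has
`[h⁻¹] ε(z) = ε(z[h]) [h⁻¹]`. -/
theorem eps_commutation (K G : Type*) [CommRing K] [Group G] :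
    (∀ z : KparG K G, epsKpar K G z ∈ Bsub K G) ∧
      ∀ (h : G) (z : KparG K G),
        pr K h⁻¹ * epsKpar K G z = epsKpar K G (z * pr K h) * pr K h⁻¹ :=
  ⟨epsKpar_mem_Bsub K, pr_inv_mul_epsKpar K⟩
end

section
/- The map g ↦ [g] from G to K_par G is a partial representation, and for every partial representation π of G in a unital K-algebra A there exists a unique K-algebra homomorphism φ: K_par G → A with π(g) = φ([g]) for all g ∈ G. -/
/-- A partial representation of `G` in a unital `K`-algebra (or any monoid) `A`:
`π(1) = 1`, `π(s)π(t)π(t⁻¹) = π(st)π(t⁻¹)`, `π(s⁻¹)π(s)π(t) = π(s⁻¹)π(st)`. -/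
def IsPartialRep {G A : Type*} [Group G] [Monoid A] (π : G → A) : Prop :=
  π 1 = 1 ∧ (∀ s t : G, π s * π t * π t⁻¹ = π (s * t) * π t⁻¹) ∧
    (∀ s t : G, π s⁻¹ * π s * π t = π s⁻¹ * π (s * t))

/-! `S(G)` is presented by the generators `[g]` subject to exactly the relations defining a partial
representation, so partial representations of `G` in a monoid `M` are the monoid homomorphisms
`S(G) →* M`; the universal property of the monoid algebra then turns these into `K`-algebra
homomorphisms `K_par G →ₐ[K] A`. -/

namespace ExelMonoid

variable {G M : Type*} [Group G] [Monoid M]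

theorem isPartialRep_of : IsPartialRep (ExelMonoid.of : G → ExelMonoid G) := by
  have rel {x y : FreeMonoid G} (h : ExelRel G x y) : (ExelCon G).mk' x = (ExelCon G).mk' y :=
    (Con.eq _).2 (ConGen.Rel.of _ _ h)
  exact ⟨rel .one, fun s t => by simpa only [of, map_mul] using rel (.right s t),
    fun s t => by simpa only [of, map_mul] using rel (.left s t)⟩

def lift (π : G → M) (hπ : IsPartialRep π) : ExelMonoid G →* M :=
  (ExelCon G).lift (FreeMonoid.lift π) <| Con.conGen_le.2 fun x y h => by
    obtain ⟨h1, hr, hl⟩ := hπ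
    cases h with
    | one => simp [Con.ker_rel, h1]
    | left s t => simp [Con.ker_rel, hl s t]
    | right s t => simp [Con.ker_rel, hr s t]

@[simp]
theorem lift_of (π : G → M) (hπ : IsPartialRep π) (g : G) : lift π hπ (of g) = π g :=
  (Con.lift_mk' _ _).trans (FreeMonoid.lift_eval_of _ _)

@[ext]
theorem hom_ext {f f' : ExelMonoid G →* M} (h : ∀ g, f (of g) = f' (of g)) : f = f' :=
  Con.hom_ext <| FreeMonoid.hom_eq h

end ExelMonoid

theorem IsPartialRep.comp_monoidHom {G A B : Type*} [Group G] [Monoid A] [Monoid B]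
    {π : G → A} (hπ : IsPartialRep π) (f : A →* B) : IsPartialRep (f ∘ π) := by
  obtain ⟨h1, hr, hl⟩ := hπ
  refine ⟨by simp [h1], fun s t => ?_, fun s t => ?_⟩ <;>
    simp only [Function.comp_apply, ← map_mul, hr, hl]

theorem isPartialRep_pr (K G : Type*) [CommRing K] [Group G] :
    IsPartialRep (fun g : G => pr K g) :=
  ExelMonoid.isPartialRep_of.comp_monoidHom (MonoidAlgebra.of K (ExelMonoid G))

/-- The map `g ↦ [g]` is a partial representation of `G` in `K_par G` (the universal one),
and for every partial representation `π` of `G` in a unital `K`-algebra `A` there is a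
unique `K`-algebra homomorphism `φ : K_par G → A` with `π(g) = φ([g])` for all `g`. -/
theorem kpar_universal_property (K G : Type*) [CommRing K] [Group G] :
    IsPartialRep (fun g : G => pr K g) ∧
      ∀ (A : Type*) [Ring A] [Algebra K A] (π : G → A), IsPartialRep π →
        ∃! φ : KparG K G →ₐ[K] A, ∀ g : G, φ (pr K g) = π g := by
  refine ⟨isPartialRep_pr K G, fun A _ _ π hπ => ?_⟩
  refine ⟨MonoidAlgebra.lift K A _ (ExelMonoid.lift π hπ), fun g => by simp [pr], fun ψ hψ => ?_⟩
  refine (MonoidAlgebra.lift K A _).symm.injective (ExelMonoid.hom_ext fun g => ?_)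
  simpa [pr, MonoidAlgebra.lift_symm_apply] using hψ g
end

section
/- If π: G → End_K(M) is a partial representation and one sets M_g := e_g · M and θ_g := π_g restricted to M_{g^{-1}}, then θ = (G, M, {M_g}, {θ_g}) is a partial group action of G on the K-module M; moreover M_g = [g]·M. -/
/-- If `π : G → End_K(M)` is a partial representation, then setting `M_g := e_g·M`
(`e_g = π_g π_{g⁻¹}`) and `θ_g := π_g|_{M_{g⁻¹}}` yields a partial group action of `G` on the
`K`-module `M`: `M_1 = M`, `θ_1 = id`, each `θ_g : M_{g⁻¹} → M_g` is a `K`-isomorphism onto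
`M_g`, `θ_g(M_{g⁻¹} ∩ M_{g⁻¹h}) ⊆ M_g ∩ M_h`, and `θ_g θ_h = θ_{gh}` on
`M_{h⁻¹} ∩ M_{h⁻¹g⁻¹}`. Moreover `M_g = [g]·M`. -/
theorem partialRep_induces_partialAction {K G M : Type*} [CommRing K] [Group G]
    [AddCommGroup M] [Module K M] (π : G → Module.End K M) (hπ : IsPartialRep π) :
    let D : G → Submodule K M := fun g => LinearMap.range (π g ∘ₗ π g⁻¹)
    (D 1 = ⊤) ∧ (π 1 = LinearMap.id) ∧
      (∀ g : G, ∀ m ∈ D g⁻¹, π g m ∈ D g) ∧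
      (∀ g : G, ∀ m ∈ D g⁻¹, π g⁻¹ (π g m) = m) ∧
      (∀ g : G, ∀ y ∈ D g, ∃ m ∈ D g⁻¹, π g m = y) ∧
      (∀ g h : G, ∀ m ∈ D g⁻¹ ⊓ D (g⁻¹ * h), π g m ∈ D g ⊓ D h) ∧
      (∀ g h : G, ∀ m ∈ D h⁻¹ ⊓ D (h⁻¹ * g⁻¹), π g (π h m) = π (g * h) m) ∧
      (∀ g : G, D g = LinearMap.range (π g)) := by
  obtain ⟨h1, hR, hL⟩ := hπ
  intro D
  have hidem : ∀ g : G, π g * π g⁻¹ * π g = π g := by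
    intro g
    have := hR g g⁻¹
    simpa [h1] using this
  have hidem' : ∀ (g : G) (x : M), π g (π g⁻¹ (π g x)) = π g x := by
    intro g x
    have := congrArg (fun f : Module.End K M => f x) (hidem g)
    simpa [Module.End.mul_apply] using this
  -- D g = range (π g)
  have hrange : ∀ g : G, D g = LinearMap.range (π g) := by
    intro g
    apply le_antisymm
    · rintro m ⟨x, rfl⟩
      exact ⟨π g⁻¹ x, rfl⟩
    · rintro m ⟨x, rfl⟩
      exact ⟨π g x, hidem' g x⟩
  have hmem : ∀ (g : G) (m : M), m ∈ D g ↔ ∃ x, π g x = m := by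
    intro g m; rw [hrange]; rfl
  have h1' : π 1 = LinearMap.id := by
    ext x; rw [h1]; rfl
  have hret : ∀ (g : G) (m : M), m ∈ D g⁻¹ → π g⁻¹ (π g m) = m := by
    intro g m hm
    obtain ⟨x, rfl⟩ := (hmem g⁻¹ m).1 hm
    have := hidem' g⁻¹ x
    simpa using this
  refine ⟨?_, h1', ?_, hret, ?_, ?_, ?_, hrange⟩
  · rw [hrange]
    apply top_le_iff.1
    rintro m -
    exact ⟨m, by rw [h1']; rfl⟩
  · intro g m _
    exact (hmem g _).2 ⟨m, rfl⟩
  · intro g y hy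
    obtain ⟨x, rfl⟩ := (hmem g y).1 hy
    exact ⟨π g⁻¹ (π g x), (hmem g⁻¹ _).2 ⟨π g x, rfl⟩, hidem' g x⟩
  · rintro g h m ⟨hm1, hm2⟩
    refine ⟨(hmem g _).2 ⟨m, rfl⟩, ?_⟩
    obtain ⟨x, hx⟩ := (hmem (g⁻¹ * h) m).1 hm2
    have hfix : π (g⁻¹ * h) (π (g⁻¹ * h)⁻¹ m) = m := by
      conv_lhs => rw [← hx]
      rw [← hx, hidem' (g⁻¹ * h) x]
    have key := congrArg (fun f : Module.End K M => f m) (hR g (g⁻¹ * h))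
    simp only [Module.End.mul_apply, mul_inv_cancel_left] at key
    exact (hmem h _).2 ⟨π (g⁻¹ * h)⁻¹ m, by rw [← key, hfix]⟩
  · rintro g h m ⟨hm1, -⟩
    have hr := hret h m hm1
    have key := congrArg (fun f : Module.End K M => f (π h m)) (hR g h)
    simp only [Module.End.mul_apply] at key
    rw [hr] at key
    exact key
end

section
/- Any set-theoretical partial group action θ of G on a set X determines a partial representation π of G on the free K-module KX, defined by π_g(x) = θ_g(x) if x ∈ X_{g^{-1}} and π_g(x) = 0 otherwise. -/
open scoped Classical

/-!
Write `π g` for the operator induced on `K X` by the partial map `θ g : D g⁻¹ → X`. The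
partial-action axioms give `π g * π h = π (g * h) * e h`, where
`e h = π h⁻¹ * π h` is the projection onto `K (D h⁻¹)`. These projections commute and satisfy
`π g * e g = π g`, and from these identities the partial-representation axioms follow formally
in any monoid.
-/

theorem isPartialRep_of_mul_eq_mul_inv_mul {G A : Type*} [Group G] [Monoid A] {π : G → A}
    (h_one : π 1 = 1) (h_mul : ∀ g h, π g * π h = π (g * h) * (π h⁻¹ * π h))
    (h_idem : ∀ g, π g * (π g⁻¹ * π g) = π g)
    (h_comm : ∀ g h, Commute (π g⁻¹ * π g) (π h⁻¹ * π h)) :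
    IsPartialRep π := by
  refine ⟨h_one, fun s t => ?_, fun s t => ?_⟩
  · simpa [mul_assoc] using (h_mul (s * t) t⁻¹).symm
  · calc π s⁻¹ * π s * π t = π s⁻¹ * π (s * t) * (π t⁻¹ * π t) := by
          rw [mul_assoc, h_mul, mul_assoc]
      _ = π t * (π (s * t)⁻¹ * π (s * t)) * (π t⁻¹ * π t) := by
          rw [h_mul, inv_mul_cancel_left]
      _ = π s⁻¹ * π (s * t) := by
          rw [mul_assoc, (h_comm _ _).eq, ← mul_assoc, h_idem, h_mul s⁻¹, inv_mul_cancel_left]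

namespace Finsupp

variable (K : Type*) {X Y Z : Type*} [CommSemiring K]

noncomputable def lpartialMap (A : Set X) (f : X → Y) : (X →₀ K) →ₗ[K] (Y →₀ K) :=
  lsum K fun x => if x ∈ A then lsingle (f x) else 0

variable {K}

@[simp]
theorem lpartialMap_single (A : Set X) (f : X → Y) (x : X) (k : K) :
    lpartialMap K A f (single x k) = if x ∈ A then single (f x) k else 0 := by
  by_cases hx : x ∈ A <;> simp [lpartialMap, hx]

theorem lpartialMap_comp (A : Set X) (B : Set Y) (f : X → Y) (g : Y → Z) :
    lpartialMap K B g ∘ₗ lpartialMap K A f = lpartialMap K (A ∩ f ⁻¹' B) (g ∘ f) := by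
  ext x k
  by_cases hx : x ∈ A <;> by_cases hfx : f x ∈ B <;> simp [hx, hfx]

theorem lpartialMap_congr {A : Set X} {f f' : X → Y} (h : Set.EqOn f f' A) :
    lpartialMap K A f = lpartialMap K A f' := by
  ext x k
  by_cases hx : x ∈ A
  · simp [hx, h hx]
  · simp [hx]

theorem lpartialMap_univ_id : lpartialMap K (Set.univ : Set X) id = LinearMap.id := by
  ext x k
  simp

end Finsupp

/-- `D g` is the domain `X_g`; `θ g` maps `D g⁻¹` bijectively onto `D g`. -/
structure IsSetPartialAction {G X : Type*} [Group G] (D : G → Set X) (θ : G → X → X) :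
    Prop where
  domain_one : D 1 = Set.univ
  map_one : ∀ x, θ 1 x = x
  map_mem_inter : ∀ g h : G, ∀ x ∈ D g⁻¹ ∩ D (g⁻¹ * h), θ g x ∈ D g ∩ D h
  map_map : ∀ g h : G, ∀ x ∈ D h⁻¹ ∩ D (h⁻¹ * g⁻¹), θ g (θ h x) = θ (g * h) x

namespace IsSetPartialAction

open Finsupp

variable {G X : Type*} [Group G] {D : G → Set X} {θ : G → X → X}

theorem map_mem (hθ : IsSetPartialAction D θ) {g : G} {x : X} (hx : x ∈ D g⁻¹) :
    θ g x ∈ D g :=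
  (hθ.map_mem_inter g g x ⟨hx, by simp [hθ.domain_one]⟩).1

theorem map_inv_map (hθ : IsSetPartialAction D θ) {g : G} {x : X} (hx : x ∈ D g⁻¹) :
    θ g⁻¹ (θ g x) = x := by
  rw [hθ.map_map g⁻¹ g x ⟨hx, by simp [hθ.domain_one]⟩, inv_mul_cancel, hθ.map_one]

theorem inter_preimage (hθ : IsSetPartialAction D θ) (g h : G) :
    D h⁻¹ ∩ θ h ⁻¹' D g⁻¹ = D h⁻¹ ∩ D (g * h)⁻¹ := by
  ext x
  simp only [Set.mem_inter_iff, Set.mem_preimage, mul_inv_rev, and_congr_right_iff]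
  intro hx
  constructor
  · intro hg
    have := hθ.map_mem_inter h⁻¹ (h⁻¹ * g⁻¹) (θ h x)
      (by simpa using ⟨hθ.map_mem hx, hg⟩)
    simpa [hθ.map_inv_map hx] using this.2
  · exact fun hgh => (hθ.map_mem_inter h g⁻¹ x ⟨hx, hgh⟩).2

theorem lpartialMap_mul (hθ : IsSetPartialAction D θ) (K : Type*) [CommSemiring K] (g h : G) :
    (lpartialMap K (D g⁻¹) (θ g) * lpartialMap K (D h⁻¹) (θ h) : Module.End K (X →₀ K)) =
      lpartialMap K (D h⁻¹ ∩ D (g * h)⁻¹) (θ (g * h)) := by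
  rw [Module.End.mul_eq_comp, lpartialMap_comp, hθ.inter_preimage]
  refine lpartialMap_congr fun x hx => hθ.map_map g h x ⟨hx.1, ?_⟩
  simpa using hx.2

theorem isPartialRep_lpartialMap (hθ : IsSetPartialAction D θ) (K : Type*) [CommSemiring K] :
    IsPartialRep fun g : G => (lpartialMap K (D g⁻¹) (θ g) : Module.End K (X →₀ K)) := by
  have h_proj : ∀ g : G, (lpartialMap K (D g⁻¹⁻¹) (θ g⁻¹) * lpartialMap K (D g⁻¹) (θ g) :
      Module.End K (X →₀ K)) = lpartialMap K (D g⁻¹) id := by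
    intro g
    rw [hθ.lpartialMap_mul, inv_mul_cancel, inv_one, hθ.domain_one, Set.inter_univ]
    exact lpartialMap_congr fun x _ => hθ.map_one x
  refine isPartialRep_of_mul_eq_mul_inv_mul ?_ (fun g h => ?_) (fun g => ?_) (fun g h => ?_)
  · simp only [inv_one, hθ.domain_one]
    rw [lpartialMap_congr fun x _ => hθ.map_one x]
    exact lpartialMap_univ_id
  · rw [h_proj, hθ.lpartialMap_mul, Module.End.mul_eq_comp, lpartialMap_comp]
    rfl
  · rw [h_proj, Module.End.mul_eq_comp, lpartialMap_comp, Set.preimage_id, Set.inter_self]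
    rfl
  · rw [h_proj, h_proj, Commute, SemiconjBy, Module.End.mul_eq_comp, Module.End.mul_eq_comp,
      lpartialMap_comp, lpartialMap_comp, Set.preimage_id, Set.preimage_id, Set.inter_comm]

end IsSetPartialAction

theorem setPartialAction_induces_partialRep_general (K : Type*) {G X : Type*} [CommRing K]
    [Group G] (D : G → Set X) (θ : G → X → X)
    (hD1 : D 1 = Set.univ) (hθ1 : ∀ x : X, θ 1 x = x)
    (hii : ∀ g h : G, ∀ x ∈ D g⁻¹ ∩ D (g⁻¹ * h), θ g x ∈ D g ∩ D h)
    (hiii : ∀ g h : G, ∀ x ∈ D h⁻¹ ∩ D (h⁻¹ * g⁻¹), θ g (θ h x) = θ (g * h) x) :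
    IsPartialRep (fun g : G =>
      (Finsupp.lsum K (fun x : X =>
        if x ∈ D g⁻¹ then Finsupp.lsingle (θ g x) else 0) :
          Module.End K (X →₀ K))) :=
  (IsSetPartialAction.mk hD1 hθ1 hii hiii).isPartialRep_lpartialMap K

/-- Any set-theoretical partial action `θ = (G, X, {X_g}, {θ_g})` of `G` on a set `X`
determines a partial representation `π` of `G` on the free `K`-module `KX`, with
`π_g(x) = θ_g(x)` for `x ∈ X_{g⁻¹}` and `π_g(x) = 0` otherwise. -/
theorem setPartialAction_induces_partialRep (K : Type*) {G X : Type*} [CommRing K]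
    [Group G] (D : G → Set X) (θ : G → X → X)
    (hD1 : D 1 = Set.univ) (hθ1 : ∀ x : X, θ 1 x = x)
    (hmem : ∀ g : G, ∀ x ∈ D g⁻¹, θ g x ∈ D g)
    (hinv : ∀ g : G, ∀ x ∈ D g⁻¹, θ g⁻¹ (θ g x) = x)
    (hii : ∀ g h : G, ∀ x ∈ D g⁻¹ ∩ D (g⁻¹ * h), θ g x ∈ D g ∩ D h)
    (hiii : ∀ g h : G, ∀ x ∈ D h⁻¹ ∩ D (h⁻¹ * g⁻¹), θ g (θ h x) = θ (g * h) x) :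
    IsPartialRep (fun g : G =>
      (Finsupp.lsum K (fun x : X =>
        if x ∈ D g⁻¹ then Finsupp.lsingle (θ g x) else 0) :
          Module.End K (X →₀ K))) :=
  setPartialAction_induces_partialRep_general K D θ hD1 hθ1 hii hiii
end

section
/- If β: M ↶ G is a right partial group action on a K-module M, then the functor M ⊗_{G_par} −: K_par G-Mod → K-Mod is right exact. -/
/-- A left partial group action of `G` on a `K`-module `M`: submodules `M_g = D g` and
`K`-linear maps `θ g` restricting to isomorphisms `M_{g⁻¹} → M_g`, with `M_1 = M`,
`θ_1 = id`, `θ_g(M_{g⁻¹} ∩ M_{g⁻¹h}) ⊆ M_g ∩ M_h` and `θ_g θ_h = θ_{gh}` on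
`M_{h⁻¹} ∩ M_{h⁻¹g⁻¹}`. -/
def IsLeftPA (K : Type*) {G M : Type*} [CommRing K] [Group G] [AddCommGroup M]
    [Module K M] (D : G → Submodule K M) (θ : G → M →ₗ[K] M) : Prop :=
  D 1 = ⊤ ∧ θ 1 = LinearMap.id ∧
    (∀ g : G, ∀ m ∈ D g⁻¹, θ g m ∈ D g) ∧
    (∀ g : G, ∀ m ∈ D g⁻¹, θ g⁻¹ (θ g m) = m) ∧
    (∀ g : G, ∀ y ∈ D g, ∃ m ∈ D g⁻¹, θ g m = y) ∧
    (∀ g h : G, ∀ m ∈ D g⁻¹ ⊓ D (g⁻¹ * h), θ g m ∈ D g ⊓ D h) ∧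
    (∀ g h : G, ∀ m ∈ D h⁻¹ ⊓ D (h⁻¹ * g⁻¹), θ g (θ h m) = θ (g * h) m)

/-- A right partial group action of `G` on a `K`-module `M` (a left partial action of
`Gᵒᵖ`): `(M_h ∩ M_{g⁻¹})β_g ⊆ M_{hg} ∩ M_g` and `(m)β_g β_h = (m)β_{gh}` on
`M_{h⁻¹g⁻¹} ∩ M_{g⁻¹}`. -/
def IsRightPA (K : Type*) {G M : Type*} [CommRing K] [Group G] [AddCommGroup M]
    [Module K M] (D : G → Submodule K M) (β : G → M →ₗ[K] M) : Prop :=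
  D 1 = ⊤ ∧ β 1 = LinearMap.id ∧
    (∀ g : G, ∀ m ∈ D g⁻¹, β g m ∈ D g) ∧
    (∀ g : G, ∀ m ∈ D g⁻¹, β g⁻¹ (β g m) = m) ∧
    (∀ g : G, ∀ y ∈ D g, ∃ m ∈ D g⁻¹, β g m = y) ∧
    (∀ g h : G, ∀ m ∈ D h ⊓ D g⁻¹, β g m ∈ D (h * g) ⊓ D g) ∧
    (∀ g h : G, ∀ m ∈ D (h⁻¹ * g⁻¹) ⊓ D g⁻¹, β h (β g m) = β (g * h) m)

open TensorProduct

/-- The relation submodule defining `M ⊗_{G_par} X` for a right partial action `β` on `M`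
and a left `K_par G`-module `X` (with its induced partial action). -/
noncomputable def pTensorModRel (K : Type*) {G M X : Type*} [CommRing K] [Group G]
    [AddCommGroup M] [Module K M] (DM : G → Submodule K M) (β : G → M →ₗ[K] M)
    [AddCommGroup X] [Module K X] [Module (KparG K G) X] [IsScalarTower K (KparG K G) X] :
    Submodule K (M ⊗[K] X) :=
  Submodule.span K {w : M ⊗[K] X | ∃ (g : G) (m : M) (x : X),
    m ∈ DM g⁻¹ ∧ w = β g m ⊗ₜ[K] (eK K g⁻¹ • x) - m ⊗ₜ[K] (pr K g • x)}

/-- The partial tensor product `M ⊗_{G_par} X`. -/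
noncomputable abbrev PTensorMod (K : Type*) {G M : Type*} [CommRing K] [Group G]
    [AddCommGroup M] [Module K M] (DM : G → Submodule K M) (β : G → M →ₗ[K] M)
    (X : Type*) [AddCommGroup X] [Module K X] [Module (KparG K G) X]
    [IsScalarTower K (KparG K G) X] :=
  M ⊗[K] X ⧸ pTensorModRel K DM β

/-- The functor `M ⊗_{G_par} − : K_par G-Mod → K-Mod` is right exact: it sends an exact
sequence `X → Y → Z → 0` of left `K_par G`-modules to an exact sequence
`M ⊗_{G_par} X → M ⊗_{G_par} Y → M ⊗_{G_par} Z → 0`. -/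
theorem pTensorMod_right_exact (K : Type*) {G M : Type*} [CommRing K] [Group G]
    [AddCommGroup M] [Module K M] (DM : G → Submodule K M) (β : G → M →ₗ[K] M)
    (hβ : IsRightPA K DM β)
    (X Y Z : Type*) [AddCommGroup X] [Module K X] [Module (KparG K G) X]
    [IsScalarTower K (KparG K G) X] [AddCommGroup Y] [Module K Y] [Module (KparG K G) Y]
    [IsScalarTower K (KparG K G) Y] [AddCommGroup Z] [Module K Z] [Module (KparG K G) Z]
    [IsScalarTower K (KparG K G) Z]
    (f : X →ₗ[KparG K G] Y) (g : Y →ₗ[KparG K G] Z)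
    (hfg : Function.Exact f g) (hg : Function.Surjective g) :
    ∃ (f' : PTensorMod K DM β X →ₗ[K] PTensorMod K DM β Y)
      (g' : PTensorMod K DM β Y →ₗ[K] PTensorMod K DM β Z),
      (∀ (m : M) (x : X), f' (Submodule.Quotient.mk (m ⊗ₜ[K] x)) =
          Submodule.Quotient.mk (m ⊗ₜ[K] f x)) ∧
      (∀ (m : M) (y : Y), g' (Submodule.Quotient.mk (m ⊗ₜ[K] y)) =
          Submodule.Quotient.mk (m ⊗ₜ[K] g y)) ∧
      Function.Exact f' g' ∧ Function.Surjective g' := by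
  classical
  let fK : X →ₗ[K] Y := f.restrictScalars K
  let gK : Y →ₗ[K] Z := g.restrictScalars K
  let F : M ⊗[K] X →ₗ[K] M ⊗[K] Y := LinearMap.lTensor M fK
  let Gt : M ⊗[K] Y →ₗ[K] M ⊗[K] Z := LinearMap.lTensor M gK
  have hF : pTensorModRel K (X := X) DM β ≤
      (pTensorModRel K (X := Y) DM β).comap F := by
    rw [pTensorModRel, Submodule.span_le]
    rintro w ⟨a, m, x, hm, rfl⟩
    simp only [SetLike.mem_coe, Submodule.mem_comap, map_sub, LinearMap.lTensor_tmul, F]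
    refine Submodule.subset_span ⟨a, m, f x, hm, ?_⟩
    simp only [fK, LinearMap.restrictScalars_apply, map_smul]
  have hGt : pTensorModRel K (X := Y) DM β ≤
      (pTensorModRel K (X := Z) DM β).comap Gt := by
    rw [pTensorModRel, Submodule.span_le]
    rintro w ⟨a, m, y, hm, rfl⟩
    simp only [SetLike.mem_coe, Submodule.mem_comap, map_sub, LinearMap.lTensor_tmul, Gt]
    refine Submodule.subset_span ⟨a, m, g y, hm, ?_⟩
    simp only [gK, LinearMap.restrictScalars_apply, map_smul]
  let f' : PTensorMod K DM β X →ₗ[K] PTensorMod K DM β Y :=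
    (pTensorModRel K (X := X) DM β).mapQ (pTensorModRel K (X := Y) DM β) F hF
  let g' : PTensorMod K DM β Y →ₗ[K] PTensorMod K DM β Z :=
    (pTensorModRel K (X := Y) DM β).mapQ (pTensorModRel K (X := Z) DM β) Gt hGt
  have hgf : gK.comp fK = 0 := by
    ext x
    simpa [gK, fK] using hfg.apply_apply_eq_zero x
  have hGtF : Gt.comp F = 0 := by
    rw [show Gt.comp F = LinearMap.lTensor M (gK.comp fK) from
      (LinearMap.lTensor_comp M gK fK).symm, hgf, LinearMap.lTensor_zero]
  have hexT : Function.Exact F Gt := by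
    refine lTensor_exact M ?_ hg
    intro y
    exact hfg y
  have hmap : (pTensorModRel K (X := Y) DM β).map Gt = pTensorModRel K (X := Z) DM β := by
    rw [pTensorModRel, pTensorModRel, Submodule.map_span]
    apply le_antisymm
    · rw [Submodule.span_le]
      rintro w ⟨w', ⟨a, m, y, hm, rfl⟩, rfl⟩
      refine Submodule.subset_span ⟨a, m, g y, hm, ?_⟩
      simp only [map_sub, LinearMap.lTensor_tmul, Gt, gK,
        LinearMap.restrictScalars_apply, map_smul]
    · rw [Submodule.span_le]
      rintro w ⟨a, m, z, hm, rfl⟩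
      obtain ⟨y, rfl⟩ := hg z
      refine Submodule.subset_span
        ⟨β a m ⊗ₜ[K] (eK K a⁻¹ • y) - m ⊗ₜ[K] (pr K a • y), ⟨a, m, y, hm, rfl⟩, ?_⟩
      simp only [map_sub, LinearMap.lTensor_tmul, Gt, gK,
        LinearMap.restrictScalars_apply, map_smul]
  let N : Submodule K (M ⊗[K] Y) := pTensorModRel K (X := Y) DM β ⊔ LinearMap.range F
  have hkerN : LinearMap.ker Gt ≤ N := by
    rw [LinearMap.exact_iff.mp hexT]
    exact le_sup_right
  have hmapN : N.map Gt = pTensorModRel K (X := Z) DM β := by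
    rw [Submodule.map_sup, hmap, ← LinearMap.range_comp, hGtF, LinearMap.range_zero,
      sup_bot_eq]
  have hcomap : (pTensorModRel K (X := Z) DM β).comap Gt = N := by
    rw [← hmapN, Submodule.comap_map_eq, sup_eq_left.mpr hkerN]
  refine ⟨f', g', ?_, ?_, ?_, ?_⟩
  · intro m x
    rw [show f' (Submodule.Quotient.mk (m ⊗ₜ[K] x)) = Submodule.Quotient.mk (F (m ⊗ₜ[K] x))
      from Submodule.mapQ_apply _ _ _ _]
    simp only [F, LinearMap.lTensor_tmul, fK, LinearMap.restrictScalars_apply]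
  · intro m y
    rw [show g' (Submodule.Quotient.mk (m ⊗ₜ[K] y)) = Submodule.Quotient.mk (Gt (m ⊗ₜ[K] y))
      from Submodule.mapQ_apply _ _ _ _]
    simp only [Gt, LinearMap.lTensor_tmul, gK, LinearMap.restrictScalars_apply]
  · rw [LinearMap.exact_iff]
    apply le_antisymm
    · intro q hq
      obtain ⟨t, rfl⟩ := Submodule.Quotient.mk_surjective _ q
      rw [LinearMap.mem_ker, Submodule.mapQ_apply, Submodule.Quotient.mk_eq_zero] at hq
      have ht : t ∈ N := by rw [← hcomap]; exact hq
      rw [Submodule.mem_sup] at ht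
      obtain ⟨r, hr, s, hs, rfl⟩ := ht
      obtain ⟨u, rfl⟩ := hs
      refine ⟨Submodule.Quotient.mk u, ?_⟩
      rw [Submodule.mapQ_apply]
      rw [Submodule.Quotient.mk_add, (Submodule.Quotient.mk_eq_zero _).mpr hr, zero_add]
    · rintro _ ⟨p, rfl⟩
      obtain ⟨t, rfl⟩ := Submodule.Quotient.mk_surjective _ p
      rw [LinearMap.mem_ker, Submodule.mapQ_apply, Submodule.mapQ_apply]
      rw [show Gt (F t) = (Gt.comp F) t from rfl, hGtF]
      simp
  · intro q
    obtain ⟨t, rfl⟩ := Submodule.Quotient.mk_surjective _ q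
    obtain ⟨s, hs⟩ := LinearMap.lTensor_surjective M (g := gK) hg t
    exact ⟨Submodule.Quotient.mk s, by rw [Submodule.mapQ_apply, hs]⟩
end

section
/- For a right partial group action β: X ↶ G and a K_par G-A-bimodule Y (A a K-algebra), the functors (X ⊗_{G_par} Y) ⊗_A − and X ⊗_{G_par} (Y ⊗_A −) from A-Mod to K-Mod are naturally isomorphic. -/
open TensorProduct MulOpposite

/-- `((X ⊗_{G_par} Y) ⊗_A Z`, presented as a quotient of `(X ⊗[K] Y) ⊗[K] Z` by the
partial-tensor relations (tensored with `Z`) together with the `A`-balancing relations. -/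
noncomputable def lhsRel (K : Type*) {G X Y : Type*} (A : Type*) (Z : Type*) [CommRing K]
    [Group G] [AddCommGroup X] [Module K X] [AddCommGroup Y] [Module K Y]
    [Module (KparG K G) Y] [IsScalarTower K (KparG K G) Y] [Ring A] [Algebra K A]
    [Module Aᵐᵒᵖ Y] [AddCommGroup Z] [Module K Z] [Module A Z] [IsScalarTower K A Z]
    (DX : G → Submodule K X) (β : G → X →ₗ[K] X) :
    Submodule K ((X ⊗[K] Y) ⊗[K] Z) :=
  Submodule.span K
    ({w | ∃ (g : G) (m : X) (y : Y) (z : Z), m ∈ DX g⁻¹ ∧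
        w = (β g m ⊗ₜ[K] (eK K g⁻¹ • y)) ⊗ₜ[K] z - (m ⊗ₜ[K] (pr K g • y)) ⊗ₜ[K] z} ∪
      {w | ∃ (a : A) (x : X) (y : Y) (z : Z),
        w = (x ⊗ₜ[K] (op a • y)) ⊗ₜ[K] z - (x ⊗ₜ[K] y) ⊗ₜ[K] (a • z)})

/-- `X ⊗_{G_par} (Y ⊗_A Z)`, presented as a quotient of `X ⊗[K] (Y ⊗[K] Z)` by the
`A`-balancing relations (under `X`) together with the partial-tensor relations for the
induced `K_par G`-module structure on `Y ⊗_A Z`. -/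
noncomputable def rhsRel (K : Type*) {G X Y : Type*} (A : Type*) (Z : Type*) [CommRing K]
    [Group G] [AddCommGroup X] [Module K X] [AddCommGroup Y] [Module K Y]
    [Module (KparG K G) Y] [IsScalarTower K (KparG K G) Y] [Ring A] [Algebra K A]
    [Module Aᵐᵒᵖ Y] [AddCommGroup Z] [Module K Z] [Module A Z] [IsScalarTower K A Z]
    (DX : G → Submodule K X) (β : G → X →ₗ[K] X) :
    Submodule K (X ⊗[K] (Y ⊗[K] Z)) :=
  Submodule.span K
    ({w | ∃ (g : G) (m : X) (y : Y) (z : Z), m ∈ DX g⁻¹ ∧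
        w = β g m ⊗ₜ[K] ((eK K g⁻¹ • y) ⊗ₜ[K] z) - m ⊗ₜ[K] ((pr K g • y) ⊗ₜ[K] z)} ∪
      {w | ∃ (a : A) (x : X) (y : Y) (z : Z),
        w = x ⊗ₜ[K] ((op a • y) ⊗ₜ[K] z - y ⊗ₜ[K] (a • z))})

/-- Associativity of the partial tensor product: for a right partial action `β : X ↶ G`
and a `K_par G`-`A`-bimodule `Y`, the functors `(X ⊗_{G_par} Y) ⊗_A −` and
`X ⊗_{G_par} (Y ⊗_A −)` from `A`-Mod to `K`-Mod are (naturally) isomorphic, via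
`(x ⊗ y) ⊗ z ↦ x ⊗ (y ⊗ z)`. -/
theorem pTensor_assoc (K : Type*) {G X Y : Type*} (A : Type*) [CommRing K] [Group G]
    [AddCommGroup X] [Module K X] [AddCommGroup Y] [Module K Y]
    [Module (KparG K G) Y] [IsScalarTower K (KparG K G) Y] [Ring A] [Algebra K A]
    [Module Aᵐᵒᵖ Y] [SMulCommClass K Aᵐᵒᵖ Y] [SMulCommClass (KparG K G) Aᵐᵒᵖ Y]
    (DX : G → Submodule K X) (β : G → X →ₗ[K] X) (hβ : IsRightPA K DX β) :
    ∀ (Z : Type*) [AddCommGroup Z] [Module K Z] [Module A Z] [IsScalarTower K A Z],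
      ∃ e : ((X ⊗[K] Y) ⊗[K] Z ⧸ lhsRel K A Z DX β) ≃ₗ[K]
          (X ⊗[K] (Y ⊗[K] Z) ⧸ rhsRel K A Z DX β),
        ∀ (x : X) (y : Y) (z : Z),
          e (Submodule.Quotient.mk ((x ⊗ₜ[K] y) ⊗ₜ[K] z)) =
            Submodule.Quotient.mk (x ⊗ₜ[K] (y ⊗ₜ[K] z)) := by
  intro Z _ _ _ _
  set f := TensorProduct.assoc K X Y Z with hf
  have hmap : Submodule.map (f : (X ⊗[K] Y) ⊗[K] Z →ₗ[K] X ⊗[K] (Y ⊗[K] Z))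
      (lhsRel K A Z DX β) = rhsRel K A Z DX β := by
    apply le_antisymm
    · rw [lhsRel, Submodule.map_span, Submodule.span_le]
      rintro _ ⟨w, hw, rfl⟩
      rcases hw with ⟨g, m, y, z, hm, rfl⟩ | ⟨a, x, y, z, rfl⟩
      · refine Submodule.subset_span (Or.inl ⟨g, m, y, z, hm, ?_⟩)
        simp [hf, map_sub]
      · refine Submodule.subset_span (Or.inr ⟨a, x, y, z, ?_⟩)
        simp [hf, map_sub, TensorProduct.tmul_sub]
    · rw [rhsRel, Submodule.span_le]
      rintro w (⟨g, m, y, z, hm, rfl⟩ | ⟨a, x, y, z, rfl⟩)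
      · refine ⟨(β g m ⊗ₜ[K] (eK K g⁻¹ • y)) ⊗ₜ[K] z - (m ⊗ₜ[K] (pr K g • y)) ⊗ₜ[K] z,
          Submodule.subset_span (Or.inl ⟨g, m, y, z, hm, rfl⟩), ?_⟩
        simp [hf, map_sub]
      · refine ⟨(x ⊗ₜ[K] (op a • y)) ⊗ₜ[K] z - (x ⊗ₜ[K] y) ⊗ₜ[K] (a • z),
          Submodule.subset_span (Or.inr ⟨a, x, y, z, rfl⟩), ?_⟩
        simp [hf, map_sub, TensorProduct.tmul_sub]
  refine ⟨Submodule.Quotient.equiv _ _ f hmap, fun x y z => ?_⟩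
  simp [Submodule.Quotient.equiv, hf]
end

section
/- For any left partial group action α: G ↷ M on a K-module M, the G-module KG ⊗_{G_par} M together with the G-equivariant map ι: m ↦ 1 ⊗_{G_par} m is the universal global action of α: for any G-module X and G-equivariant map ψ: M → X there is a unique G-module map ψ̃: KG ⊗_{G_par} M → X with ψ̃ ∘ ι = ψ. -/
open TensorProduct

/-- The group algebra `KG`. -/
abbrev KG (K G : Type*) [CommRing K] [Group G] := MonoidAlgebra K G

/-- The relation `KG`-submodule of `KG ⊗[K] M` defining `KG ⊗_{G_par} M` for a partial
action `(D, θ)` of `G` on the `K`-module `M`. -/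
noncomputable def globRel (K : Type*) {G M : Type*} [CommRing K] [Group G]
    [AddCommGroup M] [Module K M] (D : G → Submodule K M) (θ : G → M →ₗ[K] M) :
    Submodule (KG K G) (KG K G ⊗[K] M) :=
  Submodule.span (KG K G) {w : KG K G ⊗[K] M | ∃ (g h : G) (m : M), m ∈ D h⁻¹ ∧
    w = MonoidAlgebra.of K G g ⊗ₜ[K] θ h m - MonoidAlgebra.of K G (g * h) ⊗ₜ[K] m}

/-- `KG ⊗_{G_par} M`, the universal global action of the partial action `(D, θ)`. -/
noncomputable abbrev GlobPA (K : Type*) {G M : Type*} [CommRing K] [Group G]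
    [AddCommGroup M] [Module K M] (D : G → Submodule K M) (θ : G → M →ₗ[K] M) :=
  KG K G ⊗[K] M ⧸ globRel K D θ

/-!
`KG ⊗_{G_par} M` is the `KG`-module `KG ⊗[K] M` modulo the relations `g ⊗ θ_h m = gh ⊗ m`
(`m ∈ M_{h⁻¹}`). A `K`-linear `ψ : M → X` extends to the `KG`-linear map `a ⊗ m ↦ a • ψ m`
on `KG ⊗[K] M`, which kills these relations when `ψ` is `G`-equivariant and so descends to
the quotient; it is unique because `KG ⊗[K] M` is generated over `KG` by the `1 ⊗ m`.
-/

section ExtendScalars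

variable {R A M X : Type*} [CommSemiring R] [Semiring A] [Algebra R A] [AddCommMonoid M]
  [Module R M] [AddCommMonoid X] [Module R X] [Module A X] [IsScalarTower R A X]

/-- `LinearMap.liftBaseChange` without commutativity of `A`. -/
noncomputable def LinearMap.liftBaseChange' (ψ : M →ₗ[R] X) : A ⊗[R] M →ₗ[A] X :=
  AlgebraTensorModule.lift (LinearMap.toSpanSingleton A _ ψ)

@[simp]
theorem LinearMap.liftBaseChange'_tmul (ψ : M →ₗ[R] X) (a : A) (m : M) :
    ψ.liftBaseChange' (a ⊗ₜ[R] m) = a • ψ m :=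
  rfl

end ExtendScalars

section QuotientBaseChange

variable {R A M X : Type*} [CommRing R] [Ring A] [Algebra R A] [AddCommGroup M] [Module R M]
  [AddCommGroup X] [Module R X] [Module A X] [IsScalarTower R A X]
  (N : Submodule A (A ⊗[R] M))

theorem Submodule.Quotient.mk_tmul_eq_smul_mk_one_tmul (a : A) (m : M) :
    (Submodule.Quotient.mk (a ⊗ₜ[R] m) : A ⊗[R] M ⧸ N) =
      a • Submodule.Quotient.mk ((1 : A) ⊗ₜ[R] m) := by
  rw [← Submodule.Quotient.mk_smul, smul_tmul', smul_eq_mul, mul_one]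

theorem Submodule.Quotient.baseChange_hom_ext {f g : A ⊗[R] M ⧸ N →ₗ[A] X}
    (h : ∀ m : M, f (Submodule.Quotient.mk ((1 : A) ⊗ₜ[R] m)) =
      g (Submodule.Quotient.mk ((1 : A) ⊗ₜ[R] m))) : f = g :=
  Submodule.linearMap_qext N <| AlgebraTensorModule.ext fun a m => by
    rw [LinearMap.comp_apply, LinearMap.comp_apply, Submodule.mkQ_apply,
      Submodule.Quotient.mk_tmul_eq_smul_mk_one_tmul, map_smul, map_smul, h]

end QuotientBaseChange

section Glob

variable {K G M : Type*} [CommRing K] [Group G] [AddCommGroup M] [Module K M]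
  {D : G → Submodule K M} {θ : G → M →ₗ[K] M}

theorem GlobPA.mk_one_tmul_apply_eq_smul {g : G} {m : M} (hm : m ∈ D g⁻¹) :
    (Submodule.Quotient.mk ((1 : KG K G) ⊗ₜ[K] θ g m) : GlobPA K D θ) =
      MonoidAlgebra.of K G g • Submodule.Quotient.mk ((1 : KG K G) ⊗ₜ[K] m) := by
  rw [← Submodule.Quotient.mk_tmul_eq_smul_mk_one_tmul, Submodule.Quotient.eq]
  refine Submodule.subset_span ⟨1, g, m, hm, ?_⟩
  rw [one_mul, map_one]

theorem globRel_le_ker_liftBaseChange' {X : Type*} [AddCommGroup X] [Module K X]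
    [Module (KG K G) X] [IsScalarTower K (KG K G) X] {ψ : M →ₗ[K] X}
    (hψ : ∀ g : G, ∀ m ∈ D g⁻¹, ψ (θ g m) = MonoidAlgebra.of K G g • ψ m) :
    globRel K D θ ≤ LinearMap.ker ψ.liftBaseChange' := by
  refine Submodule.span_le.2 ?_
  rintro _ ⟨g, h, m, hm, rfl⟩
  rw [SetLike.mem_coe, LinearMap.mem_ker, map_sub, LinearMap.liftBaseChange'_tmul,
    LinearMap.liftBaseChange'_tmul, hψ h m hm, smul_smul, ← map_mul, sub_self]

end Glob

theorem glob_universal_property_general (K : Type*) {G M : Type*} [CommRing K] [Group G]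
    [AddCommGroup M] [Module K M] (D : G → Submodule K M) (θ : G → M →ₗ[K] M) :
    let ι : M → GlobPA K D θ :=
      fun m => Submodule.Quotient.mk ((1 : KG K G) ⊗ₜ[K] m)
    (∀ g : G, ∀ m ∈ D g⁻¹, ι (θ g m) = MonoidAlgebra.of K G g • ι m) ∧
      ∀ (X : Type*) [AddCommGroup X] [Module K X] [Module (KG K G) X]
        [IsScalarTower K (KG K G) X] (ψ : M →ₗ[K] X),
        (∀ g : G, ∀ m ∈ D g⁻¹, ψ (θ g m) = MonoidAlgebra.of K G g • ψ m) →
        ∃! ψ' : GlobPA K D θ →ₗ[KG K G] X, ∀ m : M, ψ' (ι m) = ψ m := by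
  intro ι
  refine ⟨fun g m hm => GlobPA.mk_one_tmul_apply_eq_smul hm, fun X _ _ _ _ ψ hψ => ?_⟩
  refine ⟨(globRel K D θ).liftQ ψ.liftBaseChange' (globRel_le_ker_liftBaseChange' hψ),
    fun m => one_smul _ (ψ m), fun χ hχ => ?_⟩
  exact Submodule.Quotient.baseChange_hom_ext _ fun m => (hχ m).trans (one_smul _ (ψ m)).symm

/-- For any partial action `α = (D, θ) : G ↷ M` on a `K`-module `M`, the `G`-module
`KG ⊗_{G_par} M` together with the `G`-equivariant map `ι : m ↦ 1 ⊗ m` is the universal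
global action of `α`: every `G`-equivariant map `ψ` from `M` to a `G`-module `X` factors
uniquely through `ι` via a map of `G`-modules. -/
theorem glob_universal_property (K : Type*) {G M : Type*} [CommRing K] [Group G]
    [AddCommGroup M] [Module K M] (D : G → Submodule K M) (θ : G → M →ₗ[K] M)
    (hα : IsLeftPA K D θ) :
    let ι : M → GlobPA K D θ :=
      fun m => Submodule.Quotient.mk ((1 : KG K G) ⊗ₜ[K] m)
    (∀ g : G, ∀ m ∈ D g⁻¹, ι (θ g m) = MonoidAlgebra.of K G g • ι m) ∧
      ∀ (X : Type*) [AddCommGroup X] [Module K X] [Module (KG K G) X]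
        [IsScalarTower K (KG K G) X] (ψ : M →ₗ[K] X),
        (∀ g : G, ∀ m ∈ D g⁻¹, ψ (θ g m) = MonoidAlgebra.of K G g • ψ m) →
        ∃! ψ' : GlobPA K D θ →ₗ[KG K G] X, ∀ m : M, ψ' (ι m) = ψ m :=
  glob_universal_property_general K D θ
end

section
/- Let G be a group and S ⊆ G with 1 ∉ S. Then the two-sided ideal of B generated by {e_s : s ∈ S} is a proper ideal of B. -/
theorem eK_mem_Bsub (K : Type*) {G : Type*} [CommRing K] [Group G] (g : G) :
    eK K g ∈ Bsub K G :=
  Algebra.subset_adjoin ⟨g, rfl⟩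

/-!
The indicator of the identity, `[g] ↦ δ_{g,1}`, respects Exel's relations, so it is a character
of `S(G)` and extends to a `K`-algebra map `K_par G → K`. It sends every `e_s` with `s ≠ 1` to
`0` but `1` to `1`, so its kernel restricted to `B` is a proper ideal containing all `e_s`, `s ∈ S`.
-/

namespace ExelMonoid

variable {G : Type*} [Group G] (M : Type*) [MonoidWithZero M]

open scoped Classical in
noncomputable def deltaFree : FreeMonoid G →* M :=
  FreeMonoid.lift fun g => if g = 1 then 1 else 0

theorem exelCon_le_ker_deltaFree : ExelCon G ≤ Con.ker (deltaFree (G := G) M) := by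
  refine Con.conGen_le.mpr fun x y h => ?_
  cases h with
  | one => simp [Con.ker_rel, deltaFree]
  | left s t => by_cases hs : s = 1 <;> simp [Con.ker_rel, deltaFree, hs]
  | right s t => by_cases ht : t = 1 <;> simp [Con.ker_rel, deltaFree, ht]

noncomputable def delta : ExelMonoid G →* M :=
  Con.lift _ (deltaFree M) (exelCon_le_ker_deltaFree M)

theorem delta_e_of_ne_one {s : G} (hs : s ≠ 1) : delta M (e s) = 0 := by
  simp [delta, e, ExelMonoid.of, deltaFree, hs]

end ExelMonoid

section

variable (K : Type*) {G : Type*} [CommRing K] [Group G]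

noncomputable def KparG.delta : KparG K G →ₐ[K] K :=
  MonoidAlgebra.lift K K (ExelMonoid G) (ExelMonoid.delta K)

theorem KparG.delta_eK_of_ne_one {s : G} (hs : s ≠ 1) : KparG.delta K (eK K s) = 0 := by
  have heK : eK K s = MonoidAlgebra.of K (ExelMonoid G) (ExelMonoid.e s) := by
    simp only [eK, pr, ExelMonoid.e, map_mul]
  simp [heK, KparG.delta, ExelMonoid.delta_e_of_ne_one K hs]

end

/-- Let `G` be a group and `S ⊆ G` with `1 ∉ S`. Then the ideal of `B` generated by
`{e_s : s ∈ S}` is a proper ideal of `B`. -/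
theorem ideal_of_es_proper (K : Type*) {G : Type*} [CommRing K] [Nontrivial K] [Group G]
    (S : Set G) (hS : (1 : G) ∉ S) :
    Ideal.span ((fun s : G => (⟨eK K s, eK_mem_Bsub K s⟩ : Bsub K G)) '' S) ≠ ⊤ := by
  let δB : Bsub K G →+* K := ((KparG.delta K).comp (Bsub K G).val).toRingHom
  have hspan : Ideal.span ((fun s : G => (⟨eK K s, eK_mem_Bsub K s⟩ : Bsub K G)) '' S)
      ≤ RingHom.ker δB := by
    rw [Ideal.span_le]
    rintro _ ⟨s, hs, rfl⟩
    exact KparG.delta_eK_of_ne_one K fun h => hS (h ▸ hs)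
  exact ne_top_of_le_ne_top (RingHom.ker_ne_top δB) hspan
end
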